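/- There is an injective group homomorphism φ: ℚ/ℤ → T into Thompson's group T such that rot(φ(x)) = x for every x ∈ ℚ/ℤ, where rot is the rotation number. -/

import Mathlib

open Function Set

notation "S¹" => AddCircle (1:ℝ)

/-- The group structure on self-homeomorphisms, with `(f * g) x = f (g x)`. -/
instance homeoGroup (X : Type*) [TopologicalSpace X] : Group (X ≃ₜ X) where
  mul f g := g.trans f
  one := Homeomorph.refl X
  inv := Homeomorph.symm
  mul_assoc a b c := Homeomorph.ext fun _ => rfl
  one_mul a := Homeomorph.ext fun _ => rfl
  mul_one a := Homeomorph.ext fun _ => rfl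
  inv_mul_cancel a := Homeomorph.ext fun x => a.symm_apply_apply x

/-- `F` is a lift of the circle homeomorphism `f` through the projection `ℝ → ℝ/ℤ`. -/
def IsLift (f : S¹ ≃ₜ S¹) (F : CircleDeg1Lift) : Prop :=
  ∀ x : ℝ, f (x : S¹) = ((F x : ℝ) : S¹)

/-- A circle homeomorphism is orientation-preserving iff it admits a monotone degree-one
lift to the real line. -/
def OrientationPreserving (f : S¹ ≃ₜ S¹) : Prop := ∃ F : CircleDeg1Lift, IsLift f F

open Classical in
/-- Poincaré's rotation number of a circle homeomorphism, as an element of `ℝ/ℤ`;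
the translation number of any lift, reduced mod 1. -/
noncomputable def rot (f : S¹ ≃ₜ S¹) : S¹ :=
  if h : OrientationPreserving f then ((h.choose.translationNumber : ℝ) : S¹) else 0

/-- The fixed-point set of a circle homeomorphism. -/
def FixSet (f : S¹ ≃ₜ S¹) : Set S¹ := {s | f s = s}

/-- A subgroup has a non-abelian free subgroup iff the free group of rank 2 embeds into it. -/
def HasFreeSubgroup {Γ : Type*} [Group Γ] (G : Subgroup Γ) : Prop :=
  ∃ φ : FreeGroup (Fin 2) →* Γ, Function.Injective φ ∧ ∀ w, φ w ∈ G

/-- A real number is dyadic rational. -/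
def IsDyadic (x : ℝ) : Prop := ∃ (a : ℤ) (n : ℕ), x = (a : ℝ) / 2 ^ n

/-- Membership in Thompson's group `T`: the circle homeomorphism has a lift which maps dyadic
rationals to dyadic rationals and, away from finitely many breakpoints (mod 1, all dyadic),
is locally affine with slope an integer power of `2`. -/
def InThompsonT (f : S¹ ≃ₜ S¹) : Prop :=
  ∃ F : CircleDeg1Lift, IsLift f F ∧ (∀ x : ℝ, IsDyadic x → IsDyadic (F x)) ∧
    ∃ B : Finset ℝ, (∀ b ∈ B, IsDyadic b) ∧
      ∀ x : ℝ, (∀ b ∈ B, ∀ n : ℤ, x ≠ b + n) →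
        ∃ ε > 0, ∃ (k : ℤ) (c : ℝ), ∀ y : ℝ, |y - x| < ε → F y = 2 ^ k * y + c

/-- The subgroup `ℚ/ℤ` of `ℝ/ℤ`. -/
noncomputable def QmodZ : AddSubgroup S¹ where
  carrier := {x | ∃ q : ℚ, x = ((q : ℝ) : S¹)}
  zero_mem' := ⟨0, by norm_num⟩
  add_mem' := by
    rintro a b ⟨p, rfl⟩ ⟨q, rfl⟩
    exact ⟨p + q, by push_cast; rfl⟩
  neg_mem' := by
    rintro a ⟨q, rfl⟩
    exact ⟨-q, by push_cast; rfl⟩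

/-!
Level `n` of a tower of `ℤ`-periodic subdivisions of `ℝ` has `n!` arcs per unit interval, all of
dyadic length with dyadic endpoints, and level `n + 1` cuts every arc of level `n` into `n + 1`
pieces in the same dyadic proportions. Moving every arc of level `n` affinely `a` places forward
descends to an element of `T` with rotation number `a / n!`, and moving `(n + 1) a` arcs of
level `n + 1` is the same map. So `q ↦` (move `q * n!` arcs at any level with `q * n! ∈ ℤ`) is a
well-defined homomorphism `ℚ → T`, trivial on `ℤ`, with rotation number `q`; the rotation number
then makes the induced map on `ℚ/ℤ` injective.
-/

noncomputable section

open CircleDeg1Lift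
open scoped Nat

def dyadics : Subring ℝ where
  carrier := {x | IsDyadic x}
  zero_mem' := ⟨0, 0, by simp⟩
  one_mem' := ⟨1, 0, by simp⟩
  add_mem' := by
    rintro _ _ ⟨a, n, rfl⟩ ⟨b, m, rfl⟩
    exact ⟨a * 2 ^ m + b * 2 ^ n, n + m, by push_cast; field_simp; ring⟩
  mul_mem' := by
    rintro _ _ ⟨a, n, rfl⟩ ⟨b, m, rfl⟩
    exact ⟨a * b, n + m, by push_cast; field_simp; ring⟩
  neg_mem' := by
    rintro _ ⟨a, n, rfl⟩
    exact ⟨-a, n, by push_cast; ring⟩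

lemma mem_dyadics {x : ℝ} : x ∈ dyadics ↔ IsDyadic x := Iff.rfl

lemma two_zpow_mem_dyadics (k : ℤ) : (2 : ℝ) ^ k ∈ dyadics := by
  obtain ⟨n, rfl | rfl⟩ := Int.eq_nat_or_neg k
  · exact ⟨2 ^ n, 0, by simp⟩
  · exact ⟨1, n, by simp⟩

namespace CircleDeg1Lift

lemma periodic_coe (F : CircleDeg1Lift) : Periodic (fun x => ((F x : ℝ) : S¹)) 1 := fun x => by
  simp [F.map_add_one]

def circleMap (F : CircleDeg1Lift) : S¹ → S¹ := F.periodic_coe.lift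

@[simp] lemma circleMap_coe (F : CircleDeg1Lift) (x : ℝ) : F.circleMap x = F x := rfl

lemma circleMap_mul (F G : CircleDeg1Lift) : (F * G).circleMap = F.circleMap ∘ G.circleMap := by
  ext x
  induction x using QuotientAddGroup.induction_on
  rfl

lemma circleMap_one : (1 : CircleDeg1Lift).circleMap = id := by
  ext x
  induction x using QuotientAddGroup.induction_on
  rfl

lemma continuous_circleMap {F : CircleDeg1Lift} (hF : Continuous F) : Continuous F.circleMap :=
  (continuous_quotient_mk'.comp hF).quotient_liftOn' _

def circleHomeomorph : CircleDeg1Liftˣ →* (S¹ ≃ₜ S¹) where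
  toFun u :=
    { toFun := circleMap u
      invFun := circleMap ↑u⁻¹
      left_inv x := by
        rw [← Function.comp_apply (f := circleMap _), ← circleMap_mul, u.inv_mul, circleMap_one]
        rfl
      right_inv x := by
        rw [← Function.comp_apply (f := circleMap _), ← circleMap_mul, u.mul_inv, circleMap_one]
        rfl
      continuous_toFun := continuous_circleMap (toOrderIso u).continuous
      continuous_invFun := continuous_circleMap (toOrderIso u⁻¹).continuous }
  map_one' := Homeomorph.ext fun x => congrFun circleMap_one x
  map_mul' u v := Homeomorph.ext fun x => congrFun (circleMap_mul u v) x

lemma isLift_circleHomeomorph (u : CircleDeg1Liftˣ) : IsLift (circleHomeomorph u) u :=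
  fun _ => rfl

lemma circleHomeomorph_translate_intCast (k : ℤ) :
    circleHomeomorph (translate (Multiplicative.ofAdd (k : ℝ))) = 1 :=
  Homeomorph.ext fun x => by
    induction x using QuotientAddGroup.induction_on with
    | H y =>
      change (((k : ℝ) + y : ℝ) : S¹) = y
      simp

end CircleDeg1Lift

lemma AddCircle.exists_intCast_add_of_coe_eq {x y : ℝ} (h : (x : S¹) = y) :
    ∃ k : ℤ, y = x + k := by
  obtain ⟨k, hk⟩ := QuotientAddGroup.eq.mp h
  exact ⟨k, by simp only [zsmul_one] at hk; linarith⟩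

namespace IsLift

variable {f : S¹ ≃ₜ S¹} {F G : CircleDeg1Lift}

lemma surjective (hF : IsLift f F) : Surjective F := by
  intro z
  obtain ⟨w, hw⟩ := f.surjective (z : S¹)
  induction w using QuotientAddGroup.induction_on with
  | H y =>
    rw [hF y] at hw
    obtain ⟨k, hk⟩ := AddCircle.exists_intCast_add_of_coe_eq hw
    exact ⟨y + k, by rw [F.map_add_int, hk]⟩

lemma continuous (hF : IsLift f F) : Continuous F :=
  F.continuous_iff_surjective.mpr hF.surjective

/-- Two lifts of a circle homeomorphism differ by a continuous integer-valued function, hence by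
a constant. -/
lemma exists_eq_add_intCast (hF : IsLift f F) (hG : IsLift f G) :
    ∃ k : ℤ, ∀ x, G x = F x + k := by
  have hmaps : MapsTo (fun x => -F x + G x) univ (AddSubgroup.zmultiples (1 : ℝ)) :=
    fun x _ => QuotientAddGroup.eq.mp (by rw [← hF x, ← hG x])
  obtain ⟨k, hk⟩ := hmaps (mem_univ 0)
  refine ⟨k, fun x => ?_⟩
  have := isPreconnected_univ.constant_of_mapsTo
    (isDiscrete_iff_discreteTopology.mpr
      (inferInstanceAs (DiscreteTopology (AddSubgroup.zmultiples (1 : ℝ)))))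
    (hF.continuous.neg.add hG.continuous).continuousOn hmaps (mem_univ x) (mem_univ 0)
  simp only [Pi.add_apply, Pi.neg_apply, zsmul_one] at this hk
  linarith

lemma translationNumber_eq_add_intCast (hF : IsLift f F) (hG : IsLift f G) :
    ∃ k : ℤ, G.translationNumber = F.translationNumber + k := by
  obtain ⟨k, hk⟩ := hF.exists_eq_add_intCast hG
  have hGF : G = ↑(translate (Multiplicative.ofAdd (k : ℝ))) * F :=
    ext fun x => by rw [hk, mul_apply, CircleDeg1Lift.translate_apply, add_comm]
  have hcomm : Commute (↑(translate (Multiplicative.ofAdd (k : ℝ))) : CircleDeg1Lift) F :=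
    ext fun x => by simp [F.map_int_add]
  exact ⟨k, by rw [hGF, translationNumber_mul_of_commute hcomm, translationNumber_translate,
    add_comm]⟩

end IsLift

lemma rot_eq_translationNumber {f : S¹ ≃ₜ S¹} {F : CircleDeg1Lift} (hF : IsLift f F) :
    rot f = (F.translationNumber : S¹) := by
  have hf : OrientationPreserving f := ⟨F, hF⟩
  obtain ⟨k, hk⟩ := hF.translationNumber_eq_add_intCast hf.choose_spec
  rw [rot, dif_pos hf, hk]
  simp

/-- A `ℤ`-periodic subdivision of the line, i.e. a subdivision of the circle into `period` arcs. -/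
structure CirclePartition where
  cut : ℤ → ℝ
  period : ℕ
  strictMono_cut : StrictMono cut
  cut_add_period : ∀ i, cut (i + period) = cut i + 1

namespace CirclePartition

variable (P : CirclePartition)

def gap (i : ℤ) : ℝ := P.cut (i + 1) - P.cut i

lemma gap_pos (i : ℤ) : 0 < P.gap i := sub_pos.mpr (P.strictMono_cut (lt_add_one i))

lemma period_pos : 0 < P.period := by
  by_contra h
  have := P.cut_add_period 0
  simp_all

lemma cut_add_period_mul (i k : ℤ) : P.cut (i + P.period * k) = P.cut i + k := by
  induction k using Int.induction_on with
  | zero => simp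
  | succ k ih => rw [mul_add, mul_one, ← add_assoc, P.cut_add_period, ih]; push_cast; ring
  | pred k ih =>
    have := P.cut_add_period (i + P.period * (-k - 1))
    rw [add_assoc, ← mul_add_one, sub_add_cancel, ih] at this
    push_cast at this ih ⊢
    linarith

lemma gap_add_period_mul (i k : ℤ) : P.gap (i + P.period * k) = P.gap i := by
  rw [gap, gap, add_right_comm, cut_add_period_mul, cut_add_period_mul]
  ring

/-- The index of the arc `[cut i, cut (i + 1))` containing `x`. -/
def idx (x : ℝ) : ℤ := sSup {i | P.cut i ≤ x}

lemma nonempty_and_bddAbove (x : ℝ) :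
    {i | P.cut i ≤ x}.Nonempty ∧ BddAbove {i | P.cut i ≤ x} := by
  set n := ⌊x - P.cut 0⌋
  have hcut (k : ℤ) : P.cut (P.period * k) = P.cut 0 + k := by
    simpa using P.cut_add_period_mul 0 k
  refine ⟨⟨P.period * n, ?_⟩, ⟨P.period * (n + 1), fun i (hi : P.cut i ≤ x) => ?_⟩⟩
  · rw [mem_ofPred_eq, hcut]
    linarith [Int.floor_le (x - P.cut 0)]
  · by_contra! h
    have := P.strictMono_cut h
    rw [hcut] at this
    push_cast at this
    linarith [Int.lt_floor_add_one (x - P.cut 0)]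

lemma cut_idx_le (x : ℝ) : P.cut (P.idx x) ≤ x :=
  Int.csSup_mem (P.nonempty_and_bddAbove x).1 (P.nonempty_and_bddAbove x).2

lemma lt_cut_idx_add_one (x : ℝ) : x < P.cut (P.idx x + 1) := by
  by_contra! h
  have : P.idx x + 1 ≤ P.idx x := le_csSup (P.nonempty_and_bddAbove x).2 h
  omega

lemma idx_eq {x : ℝ} {i : ℤ} (h₁ : P.cut i ≤ x) (h₂ : x < P.cut (i + 1)) : P.idx x = i := by
  have h₃ := P.cut_idx_le x
  have h₄ := P.lt_cut_idx_add_one x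
  have := P.strictMono_cut.lt_iff_lt.mp (h₃.trans_lt h₂)
  have := P.strictMono_cut.lt_iff_lt.mp (h₁.trans_lt h₄)
  omega

lemma idx_add_intCast (x : ℝ) (k : ℤ) : P.idx (x + k) = P.idx x + P.period * k := by
  have h₁ := P.cut_idx_le x
  have h₂ := P.lt_cut_idx_add_one x
  apply P.idx_eq
  · rw [cut_add_period_mul]; linarith
  · rw [add_right_comm, cut_add_period_mul]; linarith

/-- Maps each arc `i` affinely onto the arc `i + a`. -/
def shiftFun (a : ℤ) (x : ℝ) : ℝ :=
  P.cut (P.idx x + a) + P.gap (P.idx x + a) / P.gap (P.idx x) * (x - P.cut (P.idx x))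

lemma idx_shiftFun (a : ℤ) (x : ℝ) : P.idx (P.shiftFun a x) = P.idx x + a := by
  have h₁ := P.cut_idx_le x
  have h₂ := P.lt_cut_idx_add_one x
  have hg := P.gap_pos (P.idx x)
  have hg' := P.gap_pos (P.idx x + a)
  have hx : x - P.cut (P.idx x) < P.gap (P.idx x) := by rw [gap]; linarith
  apply P.idx_eq
  · have : 0 ≤ P.gap (P.idx x + a) / P.gap (P.idx x) * (x - P.cut (P.idx x)) := by
      apply mul_nonneg (by positivity); linarith
    rw [shiftFun]; linarith
  · have : P.gap (P.idx x + a) / P.gap (P.idx x) * (x - P.cut (P.idx x)) <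
        P.gap (P.idx x + a) := by
      rw [div_mul_eq_mul_div, div_lt_iff₀ hg]; gcongr
    have : P.cut (P.idx x + a + 1) = P.cut (P.idx x + a) + P.gap (P.idx x + a) := by
      rw [gap]; ring
    rw [shiftFun, this]
    linarith

lemma shiftFun_shiftFun (a b : ℤ) (x : ℝ) :
    P.shiftFun a (P.shiftFun b x) = P.shiftFun (a + b) x := by
  have := (P.gap_pos (P.idx x + b)).ne'
  have := (P.gap_pos (P.idx x)).ne'
  rw [shiftFun, idx_shiftFun, shiftFun, shiftFun, add_assoc, add_comm b a]
  field_simp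
  ring

lemma shiftFun_zero (x : ℝ) : P.shiftFun 0 x = x := by
  rw [shiftFun, add_zero, div_self (P.gap_pos _).ne']
  ring

lemma shiftFun_add_one (a : ℤ) (x : ℝ) : P.shiftFun a (x + 1) = P.shiftFun a x + 1 := by
  have := P.idx_add_intCast x 1
  rw [Int.cast_one] at this
  rw [shiftFun, shiftFun, this, add_right_comm, cut_add_period_mul, gap_add_period_mul,
    gap_add_period_mul, cut_add_period_mul]
  ring

lemma monotone_shiftFun (a : ℤ) : Monotone (P.shiftFun a) := by
  intro x y hxy
  have hx₁ := P.cut_idx_le x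
  have hx₂ := P.lt_cut_idx_add_one x
  have hy₁ := P.cut_idx_le y
  have hy₂ := P.lt_cut_idx_add_one y
  have hle : P.idx x ≤ P.idx y :=
    Int.lt_add_one_iff.mp (P.strictMono_cut.lt_iff_lt.mp (hx₁.trans_lt (hxy.trans_lt hy₂)))
  obtain h | h := eq_or_lt_of_le hle
  · rw [shiftFun, shiftFun, h]
    gcongr
    exact (div_pos (P.gap_pos _) (P.gap_pos _)).le
  · calc P.shiftFun a x ≤ P.cut (P.idx x + a + 1) := by
          rw [← idx_shiftFun]; exact (P.lt_cut_idx_add_one _).le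
      _ ≤ P.cut (P.idx y + a) := P.strictMono_cut.monotone (by omega)
      _ ≤ P.shiftFun a y := by rw [← idx_shiftFun]; exact P.cut_idx_le _

def shift (a : ℤ) : CircleDeg1Lift :=
  ⟨⟨P.shiftFun a, P.monotone_shiftFun a⟩, P.shiftFun_add_one a⟩

@[simp] lemma shift_apply (a : ℤ) (x : ℝ) : P.shift a x = P.shiftFun a x := rfl

lemma shift_add (a b : ℤ) : P.shift (a + b) = P.shift a * P.shift b :=
  CircleDeg1Lift.ext fun x => (P.shiftFun_shiftFun a b x).symm

lemma shift_zero : P.shift 0 = 1 := CircleDeg1Lift.ext P.shiftFun_zero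

lemma shift_period_mul (k : ℤ) (x : ℝ) : P.shift (P.period * k) x = x + k := by
  rw [shift_apply, shiftFun, cut_add_period_mul, gap_add_period_mul,
    div_self (P.gap_pos _).ne']
  ring

lemma shift_pow (a : ℤ) (n : ℕ) : P.shift a ^ n = P.shift (n * a) := by
  induction n with
  | zero => simp [shift_zero]
  | succ n ih => rw [pow_succ, ih, ← shift_add]; push_cast; ring_nf

lemma translationNumber_shift (a : ℤ) : (P.shift a).translationNumber = a / P.period := by
  refine translationNumber_of_map_pow_eq_add_int _ (x := 0) ?_ P.period_pos
  rw [shift_pow, shift_period_mul]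

/-- `Q` cuts every arc of `P` into `m` arcs, in proportions that do not depend on the arc. -/
def IsUniformRefinement (Q P : CirclePartition) (m : ℤ) : Prop :=
  0 < m ∧ ∃ c r : ℤ → ℝ, c 0 = 0 ∧ ∀ q d, 0 ≤ d → d < m →
    Q.cut (m * q + d) = P.cut q + c d * P.gap q ∧ Q.gap (m * q + d) = r d * P.gap q

namespace IsUniformRefinement

variable {Q P : CirclePartition} {m : ℤ}

lemma cut_mul (h : Q.IsUniformRefinement P m) (q : ℤ) : Q.cut (m * q) = P.cut q := by
  obtain ⟨hm, c, r, hc0, hcr⟩ := h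
  simpa [hc0] using (hcr q 0 le_rfl hm).1

lemma exists_idx_eq (h : Q.IsUniformRefinement P m) (x : ℝ) :
    ∃ d, 0 ≤ d ∧ d < m ∧ Q.idx x = m * P.idx x + d := by
  have hlo : m * P.idx x < Q.idx x + 1 := Q.strictMono_cut.lt_iff_lt.mp <| by
    rw [h.cut_mul]; linarith [P.cut_idx_le x, Q.lt_cut_idx_add_one x]
  have hhi : Q.idx x < m * (P.idx x + 1) := Q.strictMono_cut.lt_iff_lt.mp <| by
    rw [h.cut_mul]; linarith [Q.cut_idx_le x, P.lt_cut_idx_add_one x]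
  exact ⟨Q.idx x - m * P.idx x, by linarith, by linarith, by ring⟩

lemma shift_mul (h : Q.IsUniformRefinement P m) (a : ℤ) : Q.shift (m * a) = P.shift a := by
  ext x
  obtain ⟨d, hd₀, hdm, hd⟩ := h.exists_idx_eq x
  obtain ⟨-, c, r, -, hcr⟩ := h
  change Q.shiftFun (m * a) x = P.shiftFun a x
  unfold shiftFun
  set q := P.idx x
  obtain ⟨hcut, hgap⟩ := hcr q d hd₀ hdm
  obtain ⟨hcut', hgap'⟩ := hcr (q + a) d hd₀ hdm
  have hr : r d ≠ 0 := by
    have := Q.gap_pos (m * q + d)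
    rw [hgap] at this
    exact left_ne_zero_of_mul this.ne'
  have := (P.gap_pos q).ne'
  rw [hd, show m * q + d + m * a = m * (q + a) + d by ring, hcut, hgap, hcut', hgap']
  field_simp
  ring

end IsUniformRefinement

lemma isDyadic_shift (hcut : ∀ i, IsDyadic (P.cut i)) (hgap : ∀ i, ∃ k : ℤ, P.gap i = 2 ^ k)
    (a : ℤ) {x : ℝ} (hx : IsDyadic x) : IsDyadic (P.shift a x) := by
  obtain ⟨k, hk⟩ := hgap (P.idx x + a)
  obtain ⟨l, hl⟩ := hgap (P.idx x)
  rw [← mem_dyadics, shift_apply, shiftFun, hk, hl, ← zpow_sub₀ two_ne_zero]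
  exact add_mem (hcut _) (mul_mem (two_zpow_mem_dyadics _) (sub_mem hx (hcut _)))

lemma exists_shift_eq_affine (hgap : ∀ i, ∃ k : ℤ, P.gap i = 2 ^ k) (a : ℤ) {x : ℝ}
    (hx : ∀ i, x ≠ P.cut i) :
    ∃ ε > 0, ∃ (k : ℤ) (c : ℝ), ∀ y, |y - x| < ε → P.shift a y = 2 ^ k * y + c := by
  set i := P.idx x
  have h₁ := P.cut_idx_le x
  have h₂ := P.lt_cut_idx_add_one x
  have h₁ : P.cut i < x := lt_of_le_of_ne h₁ (hx i).symm
  obtain ⟨k, hk⟩ := hgap (i + a)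
  obtain ⟨l, hl⟩ := hgap i
  refine ⟨min (x - P.cut i) (P.cut (i + 1) - x), lt_min (by linarith) (by linarith), k - l,
    P.cut (i + a) - 2 ^ (k - l) * P.cut i, fun y hy => ?_⟩
  rw [abs_sub_lt_iff, lt_min_iff, lt_min_iff] at hy
  have hyi : P.idx y = i := P.idx_eq (by linarith) (by linarith)
  rw [shift_apply, shiftFun, hyi, hk, hl, ← zpow_sub₀ two_ne_zero]
  ring

lemma exists_eq_cut_add_intCast (i : ℤ) :
    ∃ j ∈ Finset.range P.period, ∃ n : ℤ, P.cut i = P.cut j + n := by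
  have hN : (0 : ℤ) < P.period := by exact_mod_cast P.period_pos
  refine ⟨(i % P.period).toNat, Finset.mem_range.mpr ?_, i / P.period, ?_⟩
  · have := Int.emod_lt_of_pos i hN
    omega
  · rw [Int.toNat_of_nonneg (Int.emod_nonneg _ hN.ne'), ← cut_add_period_mul,
      Int.emod_add_mul_ediv]

lemma inThompsonT_circleHomeomorph (hcut : ∀ i, IsDyadic (P.cut i))
    (hgap : ∀ i, ∃ k : ℤ, P.gap i = 2 ^ k) (u : CircleDeg1Liftˣ) (a : ℤ)
    (hu : (u : CircleDeg1Lift) = P.shift a) : InThompsonT (circleHomeomorph u) := by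
  refine ⟨u, isLift_circleHomeomorph u, fun x hx => hu ▸ P.isDyadic_shift hcut hgap a hx,
    (Finset.range P.period).image (fun j : ℕ => P.cut j), ?_, fun x hx => ?_⟩
  · simp only [Finset.mem_image]
    rintro _ ⟨j, -, rfl⟩
    exact hcut j
  · rw [hu]
    refine P.exists_shift_eq_affine hgap a fun i hxi => ?_
    obtain ⟨j, hj, n, hn⟩ := P.exists_eq_cut_add_intCast i
    exact hx _ (Finset.mem_image_of_mem _ hj) n (hxi.trans hn)

end CirclePartition

lemma Int.exists_eq_mul_add {m : ℤ} (hm : 0 < m) (i : ℤ) :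
    ∃ q d, 0 ≤ d ∧ d < m ∧ i = m * q + d :=
  ⟨i / m, i % m, Int.emod_nonneg i hm.ne', Int.emod_lt_of_pos i hm,
    (Int.mul_ediv_add_emod i m).symm⟩

/-- Level `n + 1` cuts every arc of level `n` at the relative positions `1 - 2⁻ᵈ`, `d = 0, …, n`,
into `n + 1` arcs of relative lengths `1/2, 1/4, …, 1/2ⁿ, 1/2ⁿ`; level `n` has `n!` arcs. -/
def stdCut : ℕ → ℤ → ℝ
  | 0, i => i
  | n + 1, i => stdCut n (i / (n + 1)) +
      (1 - 2 ^ (-(i % (n + 1)))) * (stdCut n (i / (n + 1) + 1) - stdCut n (i / (n + 1)))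

lemma stdCut_succ_mul_add (n : ℕ) (q : ℤ) {d : ℤ} (hd₀ : 0 ≤ d) (hd : d < n + 1) :
    stdCut (n + 1) ((n + 1) * q + d) =
      stdCut n q + (1 - 2 ^ (-d)) * (stdCut n (q + 1) - stdCut n q) := by
  have hn : (n + 1 : ℤ) ≠ 0 := by positivity
  have hdiv : ((n + 1) * q + d) / (n + 1) = q := by
    rw [add_comm, Int.add_mul_ediv_left _ _ hn, Int.ediv_eq_zero_of_lt hd₀ hd, zero_add]
  have hmod : ((n + 1) * q + d) % (n + 1) = d := by
    rw [add_comm, Int.add_mul_emod_self_left, Int.emod_eq_of_lt hd₀ hd]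
  simp only [stdCut, hdiv, hmod]

lemma stdCut_add_factorial (n : ℕ) (i : ℤ) : stdCut n (i + n !) = stdCut n i + 1 := by
  induction n generalizing i with
  | zero => simp [stdCut]
  | succ n ih =>
    obtain ⟨q, d, hd₀, hd, rfl⟩ := Int.exists_eq_mul_add (by positivity : (0 : ℤ) < n + 1) i
    have : (n + 1) * q + d + ((n + 1) ! : ℕ) = (n + 1) * (q + n !) + d := by
      push_cast [Nat.factorial_succ]; ring
    rw [this, stdCut_succ_mul_add n _ hd₀ hd, stdCut_succ_mul_add n _ hd₀ hd, add_right_comm,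
      ih, ih]
    ring

def stdRatio (n : ℕ) (d : ℤ) : ℝ := if d < n then 2 ^ (-(d + 1)) else 2 ^ (-d)

lemma stdCut_succ_gap (n : ℕ) (q : ℤ) {d : ℤ} (hd₀ : 0 ≤ d) (hd : d < n + 1) :
    stdCut (n + 1) ((n + 1) * q + d + 1) - stdCut (n + 1) ((n + 1) * q + d) =
      stdRatio n d * (stdCut n (q + 1) - stdCut n q) := by
  have htwo : (2 : ℝ) ^ (-d) = 2 ^ (-(d + 1)) * 2 := by
    rw [← zpow_add_one₀ two_ne_zero]; ring_nf
  rw [stdCut_succ_mul_add n q hd₀ hd, stdRatio]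
  split_ifs with hdn
  · rw [add_assoc, stdCut_succ_mul_add n q (by omega) (by omega), htwo]
    ring
  · obtain rfl : d = n := by omega
    have := stdCut_succ_mul_add n (q + 1) le_rfl (by omega)
    rw [show (n + 1 : ℤ) * q + n + 1 = (n + 1) * (q + 1) + 0 by ring, this]
    simp only [neg_zero, zpow_zero]
    ring

lemma stdCut_gap_eq_two_zpow (n : ℕ) (i : ℤ) :
    ∃ k : ℤ, stdCut n (i + 1) - stdCut n i = 2 ^ k := by
  induction n generalizing i with
  | zero => exact ⟨0, by simp [stdCut]⟩
  | succ n ih =>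
    obtain ⟨q, d, hd₀, hd, rfl⟩ := Int.exists_eq_mul_add (by positivity : (0 : ℤ) < n + 1) i
    obtain ⟨k, hk⟩ := ih q
    rw [stdCut_succ_gap n q hd₀ hd, hk, stdRatio]
    split_ifs <;> exact ⟨_, (zpow_add₀ two_ne_zero _ _).symm⟩

lemma strictMono_stdCut (n : ℕ) : StrictMono (stdCut n) :=
  strictMono_int_of_lt_succ fun i => by
    obtain ⟨k, hk⟩ := stdCut_gap_eq_two_zpow n i
    linarith [zpow_pos (two_pos : (0 : ℝ) < 2) k]

lemma isDyadic_stdCut (n : ℕ) (i : ℤ) : IsDyadic (stdCut n i) := by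
  induction n generalizing i with
  | zero => exact ⟨i, 0, by simp [stdCut]⟩
  | succ n ih =>
    simp only [← mem_dyadics] at ih ⊢
    exact add_mem (ih _) (mul_mem (sub_mem (one_mem _) (two_zpow_mem_dyadics _))
      (sub_mem (ih _) (ih _)))

def stdPartition (n : ℕ) : CirclePartition :=
  ⟨stdCut n, n !, strictMono_stdCut n, stdCut_add_factorial n⟩

lemma stdPartition_isUniformRefinement (n : ℕ) :
    (stdPartition (n + 1)).IsUniformRefinement (stdPartition n) (n + 1) :=
  ⟨by positivity, fun d => 1 - 2 ^ (-d), stdRatio n, by simp,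
    fun q _ hd₀ hd => ⟨stdCut_succ_mul_add n q hd₀ hd, stdCut_succ_gap n q hd₀ hd⟩⟩

lemma stdPartition_shift_factorial_div_mul {n m : ℕ} (h : n ≤ m) (a : ℤ) :
    (stdPartition m).shift ((m ! / n ! : ℕ) * a) = (stdPartition n).shift a := by
  induction m, h using Nat.le_induction with
  | base => rw [Nat.div_self (Nat.factorial_pos n), Nat.cast_one, one_mul]
  | succ m hnm ih =>
    rw [Nat.factorial_succ, Nat.mul_div_assoc _ (Nat.factorial_dvd_factorial hnm), Nat.cast_mul,
      mul_assoc, Nat.cast_succ, (stdPartition_isUniformRefinement m).shift_mul, ih]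

lemma stdPartition_shift_eq_of_div_eq {n m : ℕ} {a b : ℤ} (h : (a : ℚ) / n ! = b / m !) :
    (stdPartition n).shift a = (stdPartition m).shift b := by
  wlog hnm : n ≤ m generalizing n m a b
  · exact (this h.symm (le_of_not_ge hnm)).symm
  have hb : b = (m ! / n ! : ℕ) * a := by
    refine Int.cast_injective (α := ℚ) ?_
    rw [Int.cast_mul, Int.cast_natCast,
      Nat.cast_div (Nat.factorial_dvd_factorial hnm) (by positivity)]
    field_simp at h ⊢
    linarith
  rw [hb, stdPartition_shift_factorial_div_mul hnm]

lemma Rat.exists_intCast_eq_mul_factorial (q : ℚ) {n : ℕ} (h : q.den ≤ n) :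
    ∃ a : ℤ, (a : ℚ) = q * n ! := by
  refine ⟨q.num * (n ! / q.den : ℕ), ?_⟩
  rw [Int.cast_mul, Int.cast_natCast, Nat.cast_div (Nat.dvd_factorial q.pos h) (by positivity),
    ← Rat.mul_den_eq_num]
  field_simp

-- `q * q.den !` is an integer, so the floor is exact.
def ratShift (q : ℚ) : CircleDeg1Lift := (stdPartition q.den).shift ⌊q * q.den !⌋

lemma ratShift_eq {q : ℚ} {n : ℕ} {a : ℤ} (h : (a : ℚ) = q * n !) :
    ratShift q = (stdPartition n).shift a := by
  obtain ⟨b, hb⟩ := q.exists_intCast_eq_mul_factorial le_rfl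
  rw [ratShift, ← hb, Int.floor_intCast]
  apply stdPartition_shift_eq_of_div_eq
  rw [hb, h]
  field_simp

lemma ratShift_add (q r : ℚ) : ratShift (q + r) = ratShift q * ratShift r := by
  obtain ⟨a, ha⟩ := q.exists_intCast_eq_mul_factorial (n := q.den + r.den) (by omega)
  obtain ⟨b, hb⟩ := r.exists_intCast_eq_mul_factorial (n := q.den + r.den) (by omega)
  rw [ratShift_eq ha, ratShift_eq hb, ← CirclePartition.shift_add, ratShift_eq]
  push_cast
  rw [ha, hb]
  ring

lemma ratShift_intCast (k : ℤ) : ratShift k = translate (Multiplicative.ofAdd (k : ℝ)) := by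
  rw [ratShift_eq (n := 0) (a := k) (by simp)]
  ext x
  have := (stdPartition 0).shift_period_mul k x
  rwa [show (stdPartition 0).period = 1 from rfl, Nat.cast_one, one_mul, add_comm] at this

lemma translationNumber_ratShift (q : ℚ) : (ratShift q).translationNumber = q := by
  obtain ⟨a, ha⟩ := q.exists_intCast_eq_mul_factorial le_rfl
  rw [ratShift_eq ha, CirclePartition.translationNumber_shift]
  have : (a : ℝ) = q * q.den ! := by exact_mod_cast ha
  rw [this, stdPartition]
  field_simp

def ratShiftHom : Multiplicative ℚ →* CircleDeg1Lift where
  toFun q := ratShift q.toAdd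
  map_one' := by simpa using ratShift_intCast 0
  map_mul' q r := ratShift_add q.toAdd r.toAdd

def ratToQmodZ : ℚ →+ QmodZ where
  toFun q := ⟨((q : ℝ) : S¹), q, rfl⟩
  map_zero' := by ext; simp
  map_add' q r := by ext; simp

lemma ratToQmodZ_surjective : Surjective ratToQmodZ := by
  rintro ⟨_, q, rfl⟩
  exact ⟨q, rfl⟩

def thompsonRat : Multiplicative ℚ →* (S¹ ≃ₜ S¹) := circleHomeomorph.comp ratShiftHom.toHomUnits

lemma isLift_thompsonRat (q : Multiplicative ℚ) : IsLift (thompsonRat q) (ratShift q.toAdd) :=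
  isLift_circleHomeomorph _

lemma ker_toMultiplicative_ratToQmodZ_le :
    (AddMonoidHom.toMultiplicative ratToQmodZ).ker ≤ thompsonRat.ker := by
  intro q hq
  obtain ⟨k, hk⟩ := (AddCircle.coe_eq_zero_iff 1).mp (congrArg Subtype.val hq)
  rw [zsmul_one] at hk
  have hqk : q.toAdd = k := by exact_mod_cast hk.symm
  have : ratShiftHom.toHomUnits q = translate (Multiplicative.ofAdd (k : ℝ)) :=
    Units.ext (by simp [ratShiftHom, hqk, ratShift_intCast])
  rw [MonoidHom.mem_ker, thompsonRat, MonoidHom.comp_apply, this,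
    circleHomeomorph_translate_intCast]

lemma inThompsonT_thompsonRat (q : Multiplicative ℚ) : InThompsonT (thompsonRat q) :=
  (stdPartition _).inThompsonT_circleHomeomorph (isDyadic_stdCut _) (stdCut_gap_eq_two_zpow _)
    _ _ rfl

lemma rot_thompsonRat (q : Multiplicative ℚ) : rot (thompsonRat q) = ((q.toAdd : ℝ) : S¹) := by
  rw [rot_eq_translationNumber (isLift_thompsonRat q), translationNumber_ratShift]

def qmodZToThompson : Multiplicative QmodZ →* (S¹ ≃ₜ S¹) :=
  (AddMonoidHom.toMultiplicative ratToQmodZ).liftOfSurjective ratToQmodZ_surjective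
    ⟨thompsonRat, ker_toMultiplicative_ratToQmodZ_le⟩

lemma exists_qmodZToThompson_eq (x : Multiplicative QmodZ) : ∃ q : ℚ,
    x.toAdd = ((q : ℝ) : S¹) ∧ qmodZToThompson x = thompsonRat (Multiplicative.ofAdd q) := by
  obtain ⟨q, hq⟩ := ratToQmodZ_surjective x.toAdd
  refine ⟨q, by rw [← hq]; rfl, ?_⟩
  obtain rfl : x = Multiplicative.ofAdd (ratToQmodZ q) := by rw [hq]; rfl
  exact MonoidHom.liftOfRightInverse_comp_apply _ _ _ _ _

lemma inThompsonT_qmodZToThompson (x : Multiplicative QmodZ) :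
    InThompsonT (qmodZToThompson x) := by
  obtain ⟨q, -, hx⟩ := exists_qmodZToThompson_eq x
  rw [hx]
  exact inThompsonT_thompsonRat _

lemma rot_qmodZToThompson (x : Multiplicative QmodZ) :
    rot (qmodZToThompson x) = (x.toAdd : S¹) := by
  obtain ⟨q, hxq, hx⟩ := exists_qmodZToThompson_eq x
  rw [hx, hxq, rot_thompsonRat, toAdd_ofAdd]

lemma injective_qmodZToThompson : Injective qmodZToThompson := fun x y hxy =>
  Multiplicative.toAdd.injective <| Subtype.ext <| by
    rw [← rot_qmodZToThompson, ← rot_qmodZToThompson, hxy]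

end

/-- There is an injective homomorphism `φ : ℚ/ℤ → T` into Thompson's group `T` with
`rot (φ x) = x` for all `x`. -/
theorem stmt17 :
    ∃ φ : Multiplicative ↥QmodZ →* (S¹ ≃ₜ S¹),
      Function.Injective φ ∧ ∀ x : Multiplicative ↥QmodZ,
        InThompsonT (φ x) ∧ rot (φ x) = ((Multiplicative.toAdd x : ↥QmodZ) : S¹) :=
  ⟨qmodZToThompson, injective_qmodZToThompson,
    fun x => ⟨inThompsonT_qmodZToThompson x, rot_qmodZToThompson x⟩⟩
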